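/- arXiv:math/0511186 — 5 statements merged into one kernel-verified Lean document; each statement's English description precedes it below -/
import Mathlib

section
/- Let d ≥ 2, i ∈ ℤ^d and r ≥ π_d^{−1/d}. Then for every z ∈ B_i(r) and every y ∈ ℝ^d \ B_i(β_d·r) one has |z − y| > r; in particular ρ(B_i(r), ℝ^d \ B_i(β_d·r)) > r whenever both sets are nonempty. -/
open MeasureTheory
open scoped ENNReal NNReal

noncomputable section

/-- The level-`m` cube `K_i^m` in `ℝ^d`:
`K_i^m = {x : |x^(l) - m·i^(l)| ≤ m/2 for all l}`. -/
def cube (d : ℕ) (m : ℝ) (i : Fin d → ℤ) : Set (EuclideanSpace ℝ (Fin d)) :=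
  {x | ∀ l, |x l - m * (i l : ℝ)| ≤ m / 2}

/-- The distance `ρ(A,B) = inf {|x - y| : x ∈ A, y ∈ B}` between two sets. -/
def rho (d : ℕ) (A B : Set (EuclideanSpace ℝ (Fin d))) : ℝ :=
  sInf (Set.image2 dist A B)

/-- The discrete ball `B_i(r)`: the union of the level-1 cubes `K_j^1` with
`ρ(K_i^1, K_j^1) ≤ r` (and `B_i(0) = ∅`). -/
def dball (d : ℕ) (i : Fin d → ℤ) (r : ℝ) : Set (EuclideanSpace ℝ (Fin d)) :=
  if 0 < r then
    ⋃ j ∈ {j : Fin d → ℤ | rho d (cube d 1 i) (cube d 1 j) ≤ r}, cube d 1 j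
  else ∅

/-- `π_d`, the Lebesgue volume of the unit Euclidean ball in `ℝ^d`. -/
def unitBallVol (d : ℕ) : ℝ :=
  (volume (Metric.ball (0 : EuclideanSpace ℝ (Fin d)) 1)).toReal

/-- `β_d = ⌈3 + 2√d · π_d^(1/d)⌉`. -/
def betaD (d : ℕ) : ℝ :=
  (⌈3 + 2 * Real.sqrt d * (unitBallVol d) ^ ((1 : ℝ) / d)⌉ : ℤ)

/-- The embedding of `ℤ^d` into `ℝ^d`. -/
def embedZ (d : ℕ) (i : Fin d → ℤ) : EuclideanSpace ℝ (Fin d) :=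
  WithLp.toLp 2 (fun l => (i l : ℝ))

/-- `A(K_j^m)`: the union of `K_j^m` with its `3^d - 1` neighbouring level-`m`
cubes, i.e. the cubes `K_i^m` with `‖i - j‖_∞ ≤ 1`. -/
def nbhd (d : ℕ) (m : ℝ) (j : Fin d → ℤ) : Set (EuclideanSpace ℝ (Fin d)) :=
  ⋃ i ∈ {i : Fin d → ℤ | ‖i - j‖ ≤ 1}, cube d m i

/-- The radius `R_i(ζ) = inf {r > 0 : Σ_{j : ρ(K_j^1,K_i^1) ≤ β_d r} ζ(j) ≤ π_d r^d}`
if `ζ i > 0` (with `inf ∅ = +∞`, so the value is taken in `ℝ≥0∞`), and `R_i(ζ) = 0`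
if `ζ i = 0`. -/
def Rad (d : ℕ) (ζ : (Fin d → ℤ) → ℕ) (i : Fin d → ℤ) : ℝ≥0∞ :=
  if ζ i = 0 then 0
  else sInf {t : ℝ≥0∞ | ∃ r : ℝ, 0 < r ∧ t = ENNReal.ofReal r ∧
    ((∑ᶠ j ∈ {j : Fin d → ℤ |
        rho d (cube d 1 j) (cube d 1 i) ≤ betaD d * r}, ζ j : ℕ) : ℝ)
      ≤ unitBallVol d * r ^ d}

/-- The sup norm `‖x‖_∞` on `ℝ^d`. -/
def supNorm (d : ℕ) (x : EuclideanSpace ℝ (Fin d)) : ℝ := ⨆ l, |x l|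

/-!
A point `z ∈ B_i(r)` lies in a unit cube `K_j` with `ρ(K_i, K_j) ≤ r`, and a point `y ∉ B_i(βr)`
lies in a unit cube `K_k` with `ρ(K_i, K_k) > βr`. Since a unit cube has diameter `√d`, the
triangle inequality gives `ρ(K_i, K_k) ≤ ρ(K_i, K_j) + √d + |z - y|`, hence
`|z - y| > (β - 1) r - √d`. With `p = π_d^{1/d}` the hypothesis on `r` reads `p r ≥ 1`, so
`β r ≥ 3r + 2√d · p r ≥ 3r + 2√d` and therefore `|z - y| > 2r + √d`.
-/

lemma rho_le_dist {d : ℕ} {A B : Set (EuclideanSpace ℝ (Fin d))}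
    {a b : EuclideanSpace ℝ (Fin d)} (ha : a ∈ A) (hb : b ∈ B) : rho d A B ≤ dist a b :=
  csInf_le ⟨0, by rintro _ ⟨u, -, v, -, rfl⟩; exact dist_nonneg⟩ (Set.mem_image2_of_mem ha hb)

lemma le_rho {d : ℕ} {A B : Set (EuclideanSpace ℝ (Fin d))} {c : ℝ}
    (hA : A.Nonempty) (hB : B.Nonempty) (h : ∀ a ∈ A, ∀ b ∈ B, c ≤ dist a b) :
    c ≤ rho d A B :=
  le_csInf (hA.image2 hB) (by rintro _ ⟨a, ha, b, hb, rfl⟩; exact h a ha b hb)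

lemma embedZ_mem_cube (d : ℕ) (j : Fin d → ℤ) : embedZ d j ∈ cube d 1 j := by
  intro l; simp [embedZ]

lemma exists_mem_cube {d : ℕ} (y : EuclideanSpace ℝ (Fin d)) :
    ∃ k : Fin d → ℤ, y ∈ cube d 1 k := by
  refine ⟨fun l => ⌊y l + 1 / 2⌋, fun l => ?_⟩
  have h₁ : (⌊y l + 1 / 2⌋ : ℝ) ≤ y l + 1 / 2 := Int.floor_le _
  have h₂ : y l + 1 / 2 - 1 < (⌊y l + 1 / 2⌋ : ℝ) := Int.sub_one_lt_floor _
  rw [abs_le]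
  constructor <;> push_cast <;> linarith

lemma dist_le_sqrt_of_forall_abs_sub_le_one {d : ℕ} {x y : EuclideanSpace ℝ (Fin d)}
    (h : ∀ l, |x l - y l| ≤ 1) : dist x y ≤ Real.sqrt d := by
  rw [EuclideanSpace.dist_eq]
  refine Real.sqrt_le_sqrt ?_
  calc ∑ l, dist (x l) (y l) ^ 2 ≤ ∑ _l : Fin d, (1 : ℝ) := by
        refine Finset.sum_le_sum fun l _ => ?_
        rw [Real.dist_eq]
        exact pow_le_one₀ (abs_nonneg _) (h l)
    _ = d := by simp

lemma dist_le_sqrt_of_mem_cube {d : ℕ} {j : Fin d → ℤ} {x y : EuclideanSpace ℝ (Fin d)}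
    (hx : x ∈ cube d 1 j) (hy : y ∈ cube d 1 j) : dist x y ≤ Real.sqrt d := by
  refine dist_le_sqrt_of_forall_abs_sub_le_one fun l => ?_
  calc |x l - y l| = |(x l - 1 * j l) - (y l - 1 * j l)| := by ring_nf
    _ ≤ |x l - 1 * j l| + |y l - 1 * j l| := abs_sub _ _
    _ ≤ 1 / 2 + 1 / 2 := add_le_add (hx l) (hy l)
    _ = 1 := by norm_num

lemma rho_cube_le_rho_cube_add_dist {d : ℕ} {i j k : Fin d → ℤ}
    {z y : EuclideanSpace ℝ (Fin d)} (hz : z ∈ cube d 1 j) (hy : y ∈ cube d 1 k) :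
    rho d (cube d 1 i) (cube d 1 k) ≤
      rho d (cube d 1 i) (cube d 1 j) + Real.sqrt d + dist z y := by
  suffices h : rho d (cube d 1 i) (cube d 1 k) - Real.sqrt d - dist z y ≤
      rho d (cube d 1 i) (cube d 1 j) by linarith
  refine le_rho ⟨_, embedZ_mem_cube d i⟩ ⟨_, embedZ_mem_cube d j⟩ fun a ha b hb => ?_
  have hay : rho d (cube d 1 i) (cube d 1 k) ≤ dist a y := rho_le_dist ha hy
  have hbz : dist b z ≤ Real.sqrt d := dist_le_sqrt_of_mem_cube hb hz
  linarith [dist_triangle4 a b z y]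

lemma exists_mem_cube_of_mem_dball {d : ℕ} {i : Fin d → ℤ} {r : ℝ}
    {z : EuclideanSpace ℝ (Fin d)} (hz : z ∈ dball d i r) :
    ∃ j, z ∈ cube d 1 j ∧ rho d (cube d 1 i) (cube d 1 j) ≤ r := by
  by_cases hr : 0 < r
  · rw [dball, if_pos hr] at hz
    obtain ⟨j, hj, hzj⟩ := Set.mem_iUnion₂.mp hz
    exact ⟨j, hzj, hj⟩
  · rw [dball, if_neg hr] at hz
    exact hz.elim

lemma lt_rho_cube_of_notMem_dball {d : ℕ} {i k : Fin d → ℤ} {s : ℝ} (hs : 0 < s)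
    {y : EuclideanSpace ℝ (Fin d)} (hy : y ∉ dball d i s) (hyk : y ∈ cube d 1 k) :
    s < rho d (cube d 1 i) (cube d 1 k) := by
  by_contra! h
  rw [dball, if_pos hs] at hy
  exact hy (Set.mem_iUnion₂.mpr ⟨k, h, hyk⟩)

lemma sub_sub_sqrt_lt_dist_of_mem_dball_of_notMem_dball {d : ℕ} {i : Fin d → ℤ} {r s : ℝ}
    (hs : 0 < s) {z y : EuclideanSpace ℝ (Fin d)} (hz : z ∈ dball d i r)
    (hy : y ∉ dball d i s) : s - r - Real.sqrt d < dist z y := by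
  obtain ⟨j, hzj, hj⟩ := exists_mem_cube_of_mem_dball hz
  obtain ⟨k, hyk⟩ := exists_mem_cube y
  have hk := lt_rho_cube_of_notMem_dball hs hy hyk
  linarith [rho_cube_le_rho_cube_add_dist (i := i) hzj hyk]

lemma unitBallVol_pos (d : ℕ) : 0 < unitBallVol d :=
  ENNReal.toReal_pos (Metric.measure_ball_pos _ _ one_pos).ne' measure_ball_lt_top.ne

lemma one_le_unitBallVol_rpow_mul {d : ℕ} {r : ℝ}
    (hr : unitBallVol d ^ (-(1 : ℝ) / d) ≤ r) : 1 ≤ unitBallVol d ^ ((1 : ℝ) / d) * r := by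
  have hp : 0 < unitBallVol d ^ ((1 : ℝ) / d) := Real.rpow_pos_of_pos (unitBallVol_pos d) _
  rw [neg_div, Real.rpow_neg (unitBallVol_pos d).le] at hr
  calc (1 : ℝ) = unitBallVol d ^ ((1 : ℝ) / d) * (unitBallVol d ^ ((1 : ℝ) / d))⁻¹ :=
        (mul_inv_cancel₀ hp.ne').symm
    _ ≤ unitBallVol d ^ ((1 : ℝ) / d) * r := mul_le_mul_of_nonneg_left hr hp.le

lemma two_mul_add_sqrt_le_betaD_mul_sub {d : ℕ} {r : ℝ} (hr : 0 ≤ r)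
    (hpr : 1 ≤ unitBallVol d ^ ((1 : ℝ) / d) * r) :
    2 * r + Real.sqrt d ≤ betaD d * r - r - Real.sqrt d := by
  have hβ : 3 + 2 * Real.sqrt d * unitBallVol d ^ ((1 : ℝ) / d) ≤ betaD d := Int.le_ceil _
  have hsqrt : 0 ≤ Real.sqrt d := Real.sqrt_nonneg d
  nlinarith [mul_le_mul_of_nonneg_right hβ hr, mul_le_mul_of_nonneg_left hpr hsqrt]

theorem statement2_general (d : ℕ) (i : Fin d → ℤ) (r : ℝ)
    (hr : (unitBallVol d) ^ (-(1 : ℝ) / d) ≤ r) :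
    (∀ z ∈ dball d i r, ∀ y ∉ dball d i (betaD d * r), r < dist z y) ∧
    ((dball d i r).Nonempty → ((dball d i (betaD d * r))ᶜ).Nonempty →
      r < rho d (dball d i r) (dball d i (betaD d * r))ᶜ) := by
  have hpr := one_le_unitBallVol_rpow_mul hr
  have hr₀ : 0 < r := pos_of_mul_pos_right (one_pos.trans_le hpr)
    (Real.rpow_pos_of_pos (unitBallVol_pos d) _).le
  have hgap := two_mul_add_sqrt_le_betaD_mul_sub hr₀.le hpr
  have hsqrt : 0 ≤ Real.sqrt d := Real.sqrt_nonneg d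
  have hβr : 0 < betaD d * r := by linarith
  have key : ∀ z ∈ dball d i r, ∀ y ∉ dball d i (betaD d * r), 2 * r + Real.sqrt d < dist z y :=
    fun z hz y hy => hgap.trans_lt (sub_sub_sqrt_lt_dist_of_mem_dball_of_notMem_dball hβr hz hy)
  refine ⟨fun z hz y hy => by linarith [key z hz y hy], fun hA hB => ?_⟩
  calc r < 2 * r + Real.sqrt d := by linarith
    _ ≤ _ := le_rho hA hB fun z hz y hy => (key z hz y hy).le

/-- Let `d ≥ 2`, `i ∈ ℤ^d` and `r ≥ π_d^(−1/d)`. Then for every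
`z ∈ B_i(r)` and every `y ∈ ℝ^d \ B_i(β_d·r)` one has `|z − y| > r`; in
particular `ρ(B_i(r), ℝ^d \ B_i(β_d·r)) > r` whenever both sets are nonempty. -/
theorem statement2 (d : ℕ) (hd : 2 ≤ d) (i : Fin d → ℤ) (r : ℝ)
    (hr : (unitBallVol d) ^ (-(1 : ℝ) / d) ≤ r) :
    (∀ z ∈ dball d i r, ∀ y ∉ dball d i (betaD d * r), r < dist z y) ∧
    ((dball d i r).Nonempty → ((dball d i (betaD d * r))ᶜ).Nonempty →
      r < rho d (dball d i r) (dball d i (betaD d * r))ᶜ) :=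
  statement2_general d i r hr
end
end

section
/- Let d ≥ 2, i ∈ ℤ^d and a > 0. If ζ, ζ' : ℤ^d → ℕ satisfy ζ(j) = ζ'(j) for every j ∈ ℤ^d with ρ(K_j^1, K_i^1) ≤ β_d·a, then R_i(ζ) ≤ a if and only if R_i(ζ') ≤ a. (That is, whether the event {R_i ≤ a} occurs is determined by the configuration inside B_i(β_d·a).) -/
/-!
The admissibility condition `Σ_{ρ(K_j,K_i) ≤ β_d r} ζ(j) ≤ π_d r^d` at a radius `r ≤ a` only reads
`ζ` inside `B_i(β_d a)`. So it suffices that `R_i(ζ) ≤ a` holds exactly when some radius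
`r ∈ (0, a]` is admissible, i.e. that the infimum defining `R_i` is attained from the right:
the left side is a nondecreasing function of `r` and the right side is continuous, so
admissibility at radii decreasing to `a` passes to `a` itself.
-/

open MeasureTheory
open scoped ENNReal NNReal

noncomputable section

lemma cube_one_center_mem (d : ℕ) (i : Fin d → ℤ) : embedZ d i ∈ cube d 1 i := by
  intro l
  simp [embedZ]

lemma rho_nonpos_of_mem {d : ℕ} {A B : Set (EuclideanSpace ℝ (Fin d))} {x : EuclideanSpace ℝ (Fin d)}
    (hA : x ∈ A) (hB : x ∈ B) : rho d A B ≤ 0 := by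
  refine csInf_le ⟨0, ?_⟩ ⟨x, hA, x, hB, dist_self x⟩
  rintro _ ⟨y, -, z, -, rfl⟩
  exact dist_nonneg

lemma unitBallVol_nonneg (d : ℕ) : 0 ≤ unitBallVol d := ENNReal.toReal_nonneg

lemma betaD_nonneg (d : ℕ) : 0 ≤ betaD d := by
  have := unitBallVol_nonneg d
  exact Int.cast_nonneg (Int.ceil_nonneg (by positivity))

lemma abs_sub_sub_one_le_rho_cube_one (d : ℕ) (i j : Fin d → ℤ) (l : Fin d) :
    |(j l : ℝ) - i l| - 1 ≤ rho d (cube d 1 j) (cube d 1 i) := by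
  refine le_csInf ⟨_, Set.mem_image2_of_mem (cube_one_center_mem d j) (cube_one_center_mem d i)⟩ ?_
  rintro _ ⟨x, hx, y, hy, rfl⟩
  have hxl : |x l - j l| ≤ 1 / 2 := by simpa using hx l
  have hyl : |y l - i l| ≤ 1 / 2 := by simpa using hy l
  have hxy : |x l - y l| ≤ dist x y := by
    simpa [Real.dist_eq] using PiLp.dist_apply_le x y l
  have := abs_sub_le (j l : ℝ) (x l) (i l)
  have := abs_sub_le (x l) (y l) (i l)
  rw [abs_sub_comm] at hxl
  linarith

lemma finite_setOf_rho_cube_one_le (d : ℕ) (i : Fin d → ℤ) (c : ℝ) :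
    {j : Fin d → ℤ | rho d (cube d 1 j) (cube d 1 i) ≤ c}.Finite := by
  refine (Set.finite_Icc (i - fun _ => ⌈c + 1⌉) (i + fun _ => ⌈c + 1⌉)).subset fun j hj => ?_
  have hbound (l : Fin d) : |j l - i l| ≤ ⌈c + 1⌉ := by
    have : |(j l : ℝ) - i l| ≤ c + 1 := by
      linarith [abs_sub_sub_one_le_rho_cube_one d i j l, Set.mem_ofPred.mp hj]
    exact_mod_cast this.trans (Int.le_ceil _)
  exact ⟨fun l => by simp only [Pi.sub_apply]; linarith [abs_le.mp (hbound l)],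
    fun l => by simp only [Pi.add_apply]; linarith [abs_le.mp (hbound l)]⟩

def ballMass (d : ℕ) (ζ : (Fin d → ℤ) → ℕ) (i : Fin d → ℤ) (c : ℝ) : ℕ :=
  ∑ᶠ j ∈ {j : Fin d → ℤ | rho d (cube d 1 j) (cube d 1 i) ≤ c}, ζ j

lemma ballMass_mono (d : ℕ) (ζ : (Fin d → ℤ) → ℕ) (i : Fin d → ℤ) : Monotone (ballMass d ζ i) := by
  intro c c' hcc'
  rw [ballMass, ballMass, finsum_mem_eq_finite_toFinset_sum _ (finite_setOf_rho_cube_one_le d i c),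
    finsum_mem_eq_finite_toFinset_sum _ (finite_setOf_rho_cube_one_le d i c')]
  exact Finset.sum_le_sum_of_subset
    (Set.Finite.toFinset_subset_toFinset.mpr fun _ hj => le_trans hj hcc')

lemma ballMass_congr {d : ℕ} {ζ ζ' : (Fin d → ℤ) → ℕ} {i : Fin d → ℤ} {c : ℝ}
    (h : ∀ j, rho d (cube d 1 j) (cube d 1 i) ≤ c → ζ j = ζ' j) :
    ballMass d ζ i c = ballMass d ζ' i c :=
  finsum_mem_congr rfl h

def IsAdmissibleRadius (d : ℕ) (ζ : (Fin d → ℤ) → ℕ) (i : Fin d → ℤ) (r : ℝ) : Prop :=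
  0 < r ∧ (ballMass d ζ i (betaD d * r) : ℝ) ≤ unitBallVol d * r ^ d

lemma Rad_eq_sInf {d : ℕ} {ζ : (Fin d → ℤ) → ℕ} {i : Fin d → ℤ} (hζ : ζ i ≠ 0) :
    Rad d ζ i = sInf (ENNReal.ofReal '' {r | IsAdmissibleRadius d ζ i r}) := by
  simp only [Rad, if_neg hζ, IsAdmissibleRadius]
  congr 1
  ext t
  constructor
  · rintro ⟨r, hr, rfl, hmass⟩
    exact ⟨r, ⟨hr, hmass⟩, rfl⟩
  · rintro ⟨r, ⟨hr, hmass⟩, rfl⟩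
    exact ⟨r, hr, rfl, hmass⟩

lemma isAdmissibleRadius_of_forall_lt_add {d : ℕ} {ζ : (Fin d → ℤ) → ℕ} {i : Fin d → ℤ} {a : ℝ}
    (ha : 0 < a) (h : ∀ ε > 0, ∃ r, a ≤ r ∧ r < a + ε ∧ IsAdmissibleRadius d ζ i r) :
    IsAdmissibleRadius d ζ i a := by
  refine ⟨ha, ?_⟩
  have hcont : Filter.Tendsto (fun ε : ℝ => unitBallVol d * (a + ε) ^ d)
      (nhdsWithin 0 (Set.Ioi 0)) (nhds (unitBallVol d * a ^ d)) := by
    simpa using ((by fun_prop : Continuous fun ε : ℝ => unitBallVol d * (a + ε) ^ d).tendsto 0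
      ).mono_left nhdsWithin_le_nhds
  refine ge_of_tendsto hcont (eventually_nhdsWithin_of_forall fun ε hε => ?_)
  obtain ⟨r, har, hrlt, -, hmass⟩ := h ε hε
  calc (ballMass d ζ i (betaD d * a) : ℝ)
      ≤ ballMass d ζ i (betaD d * r) := by
        exact_mod_cast ballMass_mono d ζ i (mul_le_mul_of_nonneg_left har (betaD_nonneg d))
    _ ≤ unitBallVol d * r ^ d := hmass
    _ ≤ unitBallVol d * (a + ε) ^ d := by
        gcongr
        · exact unitBallVol_nonneg d
        · exact ha.le.trans har

lemma Rad_le_ofReal_iff {d : ℕ} {ζ : (Fin d → ℤ) → ℕ} {i : Fin d → ℤ} {a : ℝ} (ha : 0 < a) :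
    Rad d ζ i ≤ ENNReal.ofReal a ↔
      ζ i = 0 ∨ ∃ r ≤ a, IsAdmissibleRadius d ζ i r := by
  by_cases hζ : ζ i = 0
  · simp [Rad, hζ]
  rw [Rad_eq_sInf hζ]
  simp only [hζ, false_or]
  constructor
  · intro hle
    by_contra! hnone
    refine hnone a le_rfl (isAdmissibleRadius_of_forall_lt_add ha fun ε hε => ?_)
    have hlt : ENNReal.ofReal a < ENNReal.ofReal (a + ε) :=
      (ENNReal.ofReal_lt_ofReal_iff (by linarith)).mpr (by linarith)
    obtain ⟨_, ⟨r, hr, rfl⟩, hrlt⟩ := sInf_lt_iff.mp (hle.trans_lt hlt)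
    exact ⟨r, not_lt.mp fun hra => hnone r hra.le hr,
      (ENNReal.ofReal_lt_ofReal_iff (by linarith)).mp hrlt, hr⟩
  · rintro ⟨r, hra, hr⟩
    have hmem : ENNReal.ofReal r ∈ ENNReal.ofReal '' {r | IsAdmissibleRadius d ζ i r} := ⟨r, hr, rfl⟩
    exact (sInf_le hmem).trans (ENNReal.ofReal_le_ofReal hra)

theorem statement5_general (d : ℕ) (i : Fin d → ℤ) (a : ℝ) (ha : 0 < a)
    (ζ ζ' : (Fin d → ℤ) → ℕ)
    (hagree : ∀ j : Fin d → ℤ,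
      rho d (cube d 1 j) (cube d 1 i) ≤ betaD d * a → ζ j = ζ' j) :
    Rad d ζ i ≤ ENNReal.ofReal a ↔ Rad d ζ' i ≤ ENNReal.ofReal a := by
  have hβa : 0 ≤ betaD d * a := mul_nonneg (betaD_nonneg d) ha.le
  have hi : ζ i = ζ' i :=
    hagree i ((rho_nonpos_of_mem (cube_one_center_mem d i) (cube_one_center_mem d i)).trans hβa)
  have hmass : ∀ r ≤ a, ballMass d ζ i (betaD d * r) = ballMass d ζ' i (betaD d * r) :=
    fun r hra => ballMass_congr fun j hj =>
      hagree j (hj.trans (mul_le_mul_of_nonneg_left hra (betaD_nonneg d)))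
  rw [Rad_le_ofReal_iff ha, Rad_le_ofReal_iff ha, hi]
  refine or_congr_right (exists_congr fun r => and_congr_right fun hra => ?_)
  rw [IsAdmissibleRadius, IsAdmissibleRadius, hmass r hra]

/-- Let `d ≥ 2`, `i ∈ ℤ^d` and `a > 0`. If `ζ, ζ' : ℤ^d → ℕ` agree
on every `j ∈ ℤ^d` with `ρ(K_j^1, K_i^1) ≤ β_d·a`, then `R_i(ζ) ≤ a` iff
`R_i(ζ') ≤ a`: the event `{R_i ≤ a}` is determined by the configuration inside
`B_i(β_d·a)`. -/
theorem statement5 (d : ℕ) (hd : 2 ≤ d) (i : Fin d → ℤ) (a : ℝ) (ha : 0 < a)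
    (ζ ζ' : (Fin d → ℤ) → ℕ)
    (hagree : ∀ j : Fin d → ℤ,
      rho d (cube d 1 j) (cube d 1 i) ≤ betaD d * a → ζ j = ζ' j) :
    Rad d ζ i ≤ ENNReal.ofReal a ↔ Rad d ζ' i ≤ ENNReal.ofReal a :=
  statement5_general d i a ha ζ ζ' hagree
end
end

section
/- (Chernoff bound for the Poisson distribution.) Let λ > 0 and let P be the Poisson distribution with parameter λ on ℕ. Then for every real a ≥ λ, P({n ∈ ℕ : n > a}) ≤ exp(−λ·g(λ/a)), i.e. Σ_{n ∈ ℕ, n > a} e^{−λ} λ^n/n! ≤ exp(a − λ + a·log(λ/a)). -/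
open MeasureTheory ProbabilityTheory
open scoped ENNReal NNReal

noncomputable section

/-- `g(x) = (x − 1 − log x)/x` for `x > 0`. -/
def gChernoff (x : ℝ) : ℝ := (x - 1 - Real.log x) / x

private lemma exp_hasSum' (x : ℝ) :
    HasSum (fun n : ℕ => x ^ n / n.factorial) (Real.exp x) := by
  rw [Real.exp_eq_exp_ℝ]
  exact NormedSpace.expSeries_div_hasSum_exp x

private lemma key_chernoff (lam : ℝ) (hlam : 0 < lam) (a : ℝ) (ha : lam ≤ a) :
    (∑' n : ℕ, if a < (n : ℝ) then Real.exp (-lam) * lam ^ n / n.factorial else 0)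
      ≤ Real.exp (a - lam + a * Real.log (lam / a)) := by
  have ha0 : 0 < a := hlam.trans_le ha
  set t := Real.log (a / lam) with ht
  have ht0 : 0 ≤ t := Real.log_nonneg ((one_le_div hlam).2 ha)
  have hexpt : Real.exp t = a / lam := Real.exp_log (div_pos ha0 hlam)
  have hS : HasSum (fun n : ℕ => Real.exp (-lam) * Real.exp (-(t * a)) * (a ^ n / n.factorial))
      (Real.exp (a - lam + a * Real.log (lam / a))) := by
    have := (exp_hasSum' a).mul_left (Real.exp (-lam) * Real.exp (-(t * a)))
    convert this using 1
    · rfl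
    rw [← Real.exp_add, ← Real.exp_add]
    congr 1
    rw [Real.log_div hlam.ne' ha0.ne', ht, Real.log_div ha0.ne' hlam.ne']
    ring
  have heq : ∀ n : ℕ, Real.exp (-lam) * Real.exp (-(t * a)) * (a ^ n / n.factorial)
      = Real.exp (-lam) * lam ^ n / n.factorial * Real.exp (t * ((n : ℝ) - a)) := by
    intro n
    have han : a ^ n = lam ^ n * Real.exp t ^ n := by
      rw [hexpt, ← mul_pow, mul_div_cancel₀ _ hlam.ne']
    have h2 : Real.exp (t * ((n : ℝ) - a)) = Real.exp t ^ n * Real.exp (-(t * a)) := by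
      rw [← Real.exp_nat_mul, ← Real.exp_add]; ring_nf
    rw [han, h2]; ring
  have hle : ∀ n : ℕ, (if a < (n : ℝ) then Real.exp (-lam) * lam ^ n / n.factorial else 0)
      ≤ Real.exp (-lam) * Real.exp (-(t * a)) * (a ^ n / n.factorial) := by
    intro n
    rw [heq n]
    split
    · rename_i h
      exact le_mul_of_one_le_right (by positivity)
        (Real.one_le_exp (mul_nonneg ht0 (by linarith)))
    · positivity
  exact (Summable.tsum_le_tsum hle
    (Summable.of_nonneg_of_le (fun n => by positivity) hle hS.summable)
    hS.summable).trans_eq hS.tsum_eq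

/-- Chernoff bound for the Poisson distribution: let `λ > 0` and
let `P` be the Poisson distribution with parameter `λ` on `ℕ`. Then for every
real `a ≥ λ`, `P({n : n > a}) ≤ exp(−λ·g(λ/a))`, i.e.
`Σ_{n ∈ ℕ, n > a} e^{−λ} λ^n/n! ≤ exp(a − λ + a·log(λ/a))`. -/
theorem statement7 (lam : ℝ) (hlam : 0 < lam) (a : ℝ) (ha : lam ≤ a) :
    poissonMeasure ⟨lam, hlam.le⟩ {n : ℕ | a < (n : ℝ)}
      ≤ ENNReal.ofReal (Real.exp (-(lam * gChernoff (lam / a)))) ∧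
    (∑' n : ℕ, if a < (n : ℝ) then Real.exp (-lam) * lam ^ n / n.factorial else 0)
      ≤ Real.exp (a - lam + a * Real.log (lam / a)) := by
  have ha0 : 0 < a := hlam.trans_le ha
  have hkey := key_chernoff lam hlam a ha
  have hexpo : -(lam * gChernoff (lam / a)) = a - lam + a * Real.log (lam / a) := by
    rw [gChernoff]
    field_simp
    ring
  refine ⟨?_, hkey⟩
  have hsummable : Summable
      (fun n : ℕ => if a < (n : ℝ) then Real.exp (-lam) * lam ^ n / n.factorial else 0) := by
    refine Summable.of_nonneg_of_le (fun n => by positivity) (fun n => ?_)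
      (((exp_hasSum' lam).mul_left (Real.exp (-lam))).summable)
    split
    · exact le_of_eq (by ring)
    · positivity
  have hmeas : poissonMeasure ⟨lam, hlam.le⟩ {n : ℕ | a < (n : ℝ)}
      = ENNReal.ofReal
        (∑' n : ℕ, if a < (n : ℝ) then Real.exp (-lam) * lam ^ n / n.factorial else 0) := by
    unfold poissonMeasure
    rw [Measure.sum_apply _ (by measurability)]
    rw [ENNReal.ofReal_tsum_of_nonneg (fun n => by positivity) hsummable]
    congr 1
    ext n
    rw [Measure.smul_apply, Measure.dirac_apply' _ (by measurability), Set.indicator_apply]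
    by_cases h : a < (n : ℝ)
    · simp only [Set.mem_setOf_eq, h, if_true, Pi.one_apply, smul_eq_mul, mul_one]
      rfl
    · simp [Set.mem_setOf_eq, h]
  rw [hmeas, hexpo]
  exact ENNReal.ofReal_le_ofReal hkey

end
end

section
/- Let d ≥ 1, k ≥ 1, and let i_1, …, i_M ∈ ℤ^d be a finite sequence with ‖i_{l+1} − i_l‖_∞ ≤ 1 for all 1 ≤ l < M and ‖i_M − i_1‖_∞ ≥ 5k. Then there exist indices 1 = τ(1) < τ(2) < ⋯ < τ(k) ≤ M such that ‖i_{τ(j+1)} − i_{τ(j)}‖_∞ = 5 for all 1 ≤ j < k, and ‖i_{τ(j)} − i_{τ(j')}‖_∞ ≥ 5 for all j ≠ j'. -/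
/-! Walk along the path greedily: from the current point `p t`, jump to the first index after
which the path never again comes within distance `r` of `p t`. Since the steps have length at
most `1` and distances are integers, the point reached is at distance exactly `r` from `p t`,
and every later point stays at distance at least `r` from it. Each jump lowers the distance to
the endpoint by at most `r`, so `k` points can be chosen when the endpoints are `k r` apart. -/

open Finset

theorem Pi.int_norm_eq_natCast_sup_natAbs {ι : Type*} [Fintype ι] (x : ι → ℤ) :
    ‖x‖ = ((univ.sup fun b => (x b).natAbs : ℕ) : ℝ) := by
  have h : ((univ.sup fun b => (x b).natAbs : ℕ) : NNReal) = univ.sup fun b => ‖x b‖₊ := by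
    simp only [Nat.cast_finsetSup, NNReal.natCast_natAbs]
  rw [Pi.norm_def, ← h]
  norm_cast

theorem Pi.int_dist_eq_natCast {ι : Type*} [Fintype ι] (x y : ι → ℤ) :
    ∃ n : ℕ, dist x y = n :=
  ⟨_, (dist_eq_norm x y).trans (Pi.int_norm_eq_natCast_sup_natAbs (x - y))⟩

section GreedySeparated

variable {α : Type*} [PseudoMetricSpace α]

noncomputable def lastNear (p : ℕ → α) (r : ℝ) (M t : ℕ) : ℕ :=
  Nat.findGreatest (fun l => t ≤ l ∧ dist (p l) (p t) < r) M

noncomputable def greedySeq (p : ℕ → α) (r : ℝ) (M t₀ n : ℕ) : ℕ :=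
  (fun t => lastNear p r M t + 1)^[n] t₀

variable {p : ℕ → α} {M : ℕ}

theorem lastNear_spec {r : ℝ} {t : ℕ} (hr : 0 < r) (htM : t ≤ M)
    (hfar : r ≤ dist (p M) (p t)) :
    t ≤ lastNear p r M t ∧ lastNear p r M t < M ∧ dist (p (lastNear p r M t)) (p t) < r ∧
      ∀ l, lastNear p r M t < l → l ≤ M → r ≤ dist (p l) (p t) := by
  have hself : t ≤ t ∧ dist (p t) (p t) < r := ⟨le_rfl, by rwa [dist_self]⟩
  have hle : t ≤ lastNear p r M t := Nat.le_findGreatest htM hself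
  have hnear : t ≤ lastNear p r M t ∧ dist (p (lastNear p r M t)) (p t) < r :=
    Nat.findGreatest_spec (P := fun l => t ≤ l ∧ dist (p l) (p t) < r) htM hself
  have hlt : lastNear p r M t < M := by
    refine (show lastNear p r M t ≤ M from Nat.findGreatest_le M).lt_of_ne fun h => ?_
    rw [h] at hnear
    exact hfar.not_gt hnear.2
  refine ⟨hle, hlt, hnear.2, fun l hl hlM => ?_⟩
  by_contra! hclose
  exact Nat.findGreatest_is_greatest hl hlM ⟨by omega, hclose⟩

theorem dist_lastNear_succ {r : ℕ} {t : ℕ} (hint : ∀ x y : α, ∃ n : ℕ, dist x y = n)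
    (hr : 0 < r) (htM : t ≤ M) (hfar : r ≤ dist (p M) (p t))
    (hstep : ∀ l, t ≤ l → l < M → dist (p (l + 1)) (p l) ≤ 1) :
    dist (p (lastNear p r M t + 1)) (p t) = r := by
  obtain ⟨hle, hlt, hnear, hgone⟩ := lastNear_spec (Nat.cast_pos.2 hr) htM hfar
  obtain ⟨n, hn⟩ := hint (p (lastNear p r M t + 1)) (p t)
  have hlower : (r : ℝ) ≤ n := hn ▸ hgone _ (Nat.lt_succ_self _) hlt
  have hupper : (n : ℝ) < r + 1 := calc
    (n : ℝ) = dist (p (lastNear p r M t + 1)) (p t) := hn.symm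
    _ ≤ dist (p (lastNear p r M t + 1)) (p (lastNear p r M t)) +
        dist (p (lastNear p r M t)) (p t) := dist_triangle _ _ _
    _ < 1 + r := add_lt_add_of_le_of_lt (hstep _ hle hlt) hnear
    _ = r + 1 := add_comm _ _
  rw [hn]
  exact_mod_cast le_antisymm (Nat.lt_succ_iff.1 (by exact_mod_cast hupper))
    (by exact_mod_cast hlower)

theorem greedySeq_succ (r : ℝ) (t₀ n : ℕ) :
    greedySeq p r M t₀ (n + 1) = lastNear p r M (greedySeq p r M t₀ n) + 1 :=
  Function.iterate_succ_apply' _ _ _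

theorem greedySeq_spec {r : ℕ} {t₀ : ℕ} (hint : ∀ x y : α, ∃ n : ℕ, dist x y = n)
    (hr : 0 < r) (ht₀ : t₀ ≤ M)
    (hstep : ∀ l, t₀ ≤ l → l < M → dist (p (l + 1)) (p l) ≤ 1)
    (n : ℕ) (hn : (r * n : ℝ) ≤ dist (p M) (p t₀)) :
    t₀ ≤ greedySeq p r M t₀ n ∧ greedySeq p r M t₀ n ≤ M ∧
      dist (p M) (p t₀) - r * n ≤ dist (p M) (p (greedySeq p r M t₀ n)) := by
  induction n with
  | zero => simp [greedySeq, ht₀]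
  | succ n ih =>
    rw [greedySeq_succ]
    set s := greedySeq p r M t₀ n
    obtain ⟨hs₀, hsM, hsdist⟩ := ih (by push_cast at hn; nlinarith)
    have hfar : (r : ℝ) ≤ dist (p M) (p s) := by push_cast at hn; linarith
    obtain ⟨hle, hlt, -, -⟩ := lastNear_spec (Nat.cast_pos.2 hr) hsM hfar
    have hjump := dist_lastNear_succ hint hr hsM hfar fun l hl hlM => hstep l (hs₀.trans hl) hlM
    refine ⟨by omega, hlt, ?_⟩
    have := dist_triangle (p M) (p (lastNear p r M s + 1)) (p s)
    push_cast
    linarith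

theorem greedySeq_step {r : ℕ} {t₀ : ℕ} (hint : ∀ x y : α, ∃ n : ℕ, dist x y = n)
    (hr : 0 < r) (ht₀ : t₀ ≤ M)
    (hstep : ∀ l, t₀ ≤ l → l < M → dist (p (l + 1)) (p l) ≤ 1)
    {n : ℕ} (hn : (r * (n + 1) : ℝ) ≤ dist (p M) (p t₀)) :
    greedySeq p r M t₀ n < greedySeq p r M t₀ (n + 1) ∧
      dist (p (greedySeq p r M t₀ (n + 1))) (p (greedySeq p r M t₀ n)) = r ∧
      ∀ l, greedySeq p r M t₀ (n + 1) ≤ l → l ≤ M →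
        r ≤ dist (p l) (p (greedySeq p r M t₀ n)) := by
  obtain ⟨hs₀, hsM, hsdist⟩ := greedySeq_spec hint hr ht₀ hstep n (by nlinarith)
  have hfar : (r : ℝ) ≤ dist (p M) (p (greedySeq p r M t₀ n)) := by linarith
  obtain ⟨hle, -, -, hgone⟩ := lastNear_spec (Nat.cast_pos.2 hr) hsM hfar
  rw [greedySeq_succ]
  exact ⟨by omega,
    dist_lastNear_succ hint hr hsM hfar fun l hl hlM => hstep l (hs₀.trans hl) hlM, hgone⟩

theorem greedySeq_mono {r : ℕ} {t₀ : ℕ} (hint : ∀ x y : α, ∃ n : ℕ, dist x y = n)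
    (hr : 0 < r) (ht₀ : t₀ ≤ M)
    (hstep : ∀ l, t₀ ≤ l → l < M → dist (p (l + 1)) (p l) ≤ 1)
    {m n : ℕ} (hmn : m ≤ n) (hn : (r * n : ℝ) ≤ dist (p M) (p t₀)) :
    greedySeq p r M t₀ m ≤ greedySeq p r M t₀ n := by
  induction n, hmn using Nat.le_induction with
  | base => exact le_rfl
  | succ n _ ih =>
    push_cast at hn
    exact (ih (by nlinarith)).trans (greedySeq_step hint hr ht₀ hstep hn).1.le

theorem le_dist_greedySeq {r : ℕ} {t₀ : ℕ} (hint : ∀ x y : α, ∃ n : ℕ, dist x y = n)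
    (hr : 0 < r) (ht₀ : t₀ ≤ M)
    (hstep : ∀ l, t₀ ≤ l → l < M → dist (p (l + 1)) (p l) ≤ 1)
    {m n : ℕ} (hmn : m < n) (hn : (r * n : ℝ) ≤ dist (p M) (p t₀)) :
    (r : ℝ) ≤ dist (p (greedySeq p r M t₀ n)) (p (greedySeq p r M t₀ m)) := by
  have hm : (r * (m + 1) : ℝ) ≤ dist (p M) (p t₀) :=
    le_trans (by gcongr; exact_mod_cast hmn) hn
  exact (greedySeq_step hint hr ht₀ hstep hm).2.2 _ (greedySeq_mono hint hr ht₀ hstep hmn hn)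
    (greedySeq_spec hint hr ht₀ hstep n hn).2.1

end GreedySeparated

theorem statement12_general (d : ℕ) (k : ℕ)
    (M : ℕ) (hM : 1 ≤ M) (i : ℕ → (Fin d → ℤ))
    (hstep : ∀ l, 1 ≤ l → l < M → ‖i (l + 1) - i l‖ ≤ 1)
    (hfar : (5 * k : ℝ) ≤ ‖i M - i 1‖) :
    ∃ τ : ℕ → ℕ, τ 1 = 1 ∧
      (∀ j, 1 ≤ j → j < k → τ j < τ (j + 1)) ∧
      τ k ≤ M ∧
      (∀ j, 1 ≤ j → j < k → ‖i (τ (j + 1)) - i (τ j)‖ = 5) ∧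
      (∀ j j', 1 ≤ j → j ≤ k → 1 ≤ j' → j' ≤ k → j ≠ j' →
        (5 : ℝ) ≤ ‖i (τ j) - i (τ j')‖) := by
  have hint := Pi.int_dist_eq_natCast (ι := Fin d)
  have hstep' : ∀ l, 1 ≤ l → l < M → dist (i (l + 1)) (i l) ≤ 1 := fun l h₁ h₂ =>
    (dist_eq_norm _ _).trans_le (hstep l h₁ h₂)
  have hD : ∀ n ≤ k, (((5 : ℕ) : ℝ) * n) ≤ dist (i M) (i 1) := fun n hn => by
    rw [dist_eq_norm]
    exact le_trans (by push_cast; gcongr) hfar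
  set σ := greedySeq i (5 : ℕ) M 1
  have hjump : ∀ n, n + 1 ≤ k → σ n < σ (n + 1) ∧ ‖i (σ (n + 1)) - i (σ n)‖ = 5 := by
    intro n hn
    obtain ⟨hlt, hdist, -⟩ :=
      greedySeq_step (r := 5) hint (by norm_num) hM hstep' (by exact_mod_cast hD (n + 1) hn)
    exact ⟨hlt, by rw [← dist_eq_norm]; exact_mod_cast hdist⟩
  have hsep : ∀ m n, m < n → n < k → (5 : ℝ) ≤ ‖i (σ n) - i (σ m)‖ := by
    intro m n hmn hn
    rw [← dist_eq_norm]
    exact_mod_cast le_dist_greedySeq hint (by norm_num) hM hstep' hmn (hD n hn.le)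
  refine ⟨fun j => σ (j - 1), rfl, fun j hj hjk => ?_, ?_, fun j hj hjk => ?_, ?_⟩
  · obtain ⟨n, rfl⟩ : ∃ n, j = n + 1 := ⟨j - 1, by omega⟩
    exact (hjump n hjk.le).1
  · exact (greedySeq_spec hint (by norm_num) hM hstep' (k - 1) (hD _ (Nat.sub_le k 1))).2.1
  · obtain ⟨n, rfl⟩ : ∃ n, j = n + 1 := ⟨j - 1, by omega⟩
    exact (hjump n hjk.le).2
  · intro j j' hj hjk hj' hj'k hne
    rcases hne.lt_or_gt with h | h
    · rw [norm_sub_rev]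
      exact hsep _ _ (by omega) (by omega)
    · exact hsep _ _ (by omega) (by omega)

/-- Let `d ≥ 1`, `k ≥ 1`, and let `i_1, …, i_M ∈ ℤ^d` be a finite
sequence with `‖i_{l+1} − i_l‖_∞ ≤ 1` for all `1 ≤ l < M` and
`‖i_M − i_1‖_∞ ≥ 5k`. Then there exist indices `1 = τ(1) < τ(2) < ⋯ < τ(k) ≤ M`
such that `‖i_{τ(j+1)} − i_{τ(j)}‖_∞ = 5` for all `1 ≤ j < k`, and
`‖i_{τ(j)} − i_{τ(j')}‖_∞ ≥ 5` for all `j ≠ j'`.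
(Here `‖·‖` on `Fin d → ℤ` is the sup norm.) -/
theorem statement12 (d : ℕ) (hd : 1 ≤ d) (k : ℕ) (hk : 1 ≤ k)
    (M : ℕ) (hM : 1 ≤ M) (i : ℕ → (Fin d → ℤ))
    (hstep : ∀ l, 1 ≤ l → l < M → ‖i (l + 1) - i l‖ ≤ 1)
    (hfar : (5 * k : ℝ) ≤ ‖i M - i 1‖) :
    ∃ τ : ℕ → ℕ, τ 1 = 1 ∧
      (∀ j, 1 ≤ j → j < k → τ j < τ (j + 1)) ∧
      τ k ≤ M ∧
      (∀ j, 1 ≤ j → j < k → ‖i (τ (j + 1)) - i (τ j)‖ = 5) ∧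
      (∀ j j', 1 ≤ j → j ≤ k → 1 ≤ j' → j' ≤ k → j ≠ j' →
        (5 : ℝ) ≤ ‖i (τ j) - i (τ j')‖) :=
  statement12_general d k M hM i hstep hfar
end

section
/- Let d ≥ 2, n > 0, 0 < m ≤ n/4 and j ∈ ℤ^d. If ρ(K_0^n, K_j^m) ≤ n/2, then A(K_j^m) ⊆ A(K_0^n). -/
open MeasureTheory
open scoped ENNReal NNReal

noncomputable section

/-
The centre `m • j` of `K_j^m` lies within `n/2 + m/2 + ρ(K_0^n, K_j^m) ≤ n + m/2` of the origin in
every coordinate, so every point of `A(K_j^m)` has all coordinates of size at most `n + 2m ≤ 3n/2`.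
The cube `[-3n/2, 3n/2]^d` is covered by `A(K_0^n)`: each `x ∈ [-3n/2, 3n/2]` lies in one of the
three intervals of length `n` centred at `-n`, `0`, `n`.
-/

lemma cube_center_mem_cube {d : ℕ} {m : ℝ} (hm : 0 ≤ m) (i : Fin d → ℤ) :
    WithLp.toLp 2 (fun l => m * (i l : ℝ)) ∈ cube d m i := by
  intro l
  simpa using div_nonneg hm zero_le_two

lemma exists_dist_lt_of_rho_lt {d : ℕ} {A B : Set (EuclideanSpace ℝ (Fin d))}
    (hA : A.Nonempty) (hB : B.Nonempty) {r : ℝ} (h : rho d A B < r) :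
    ∃ a ∈ A, ∃ b ∈ B, dist a b < r := by
  obtain ⟨_, ⟨a, ha, b, hb, rfl⟩, hlt⟩ := exists_lt_of_csInf_lt (hA.image2 hB) h
  exact ⟨a, ha, b, hb, hlt⟩

lemma abs_sub_le_of_rho_cube_le {d : ℕ} {n m r : ℝ} (hn : 0 ≤ n) (hm : 0 ≤ m)
    {i j : Fin d → ℤ} (h : rho d (cube d n i) (cube d m j) ≤ r) (l : Fin d) :
    |m * (j l : ℝ) - n * (i l : ℝ)| ≤ n / 2 + m / 2 + r := by
  refine le_of_forall_pos_le_add fun ε hε => ?_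
  obtain ⟨a, ha, b, hb, hab⟩ := exists_dist_lt_of_rho_lt ⟨_, cube_center_mem_cube hn i⟩
    ⟨_, cube_center_mem_cube hm j⟩ (h.trans_lt (lt_add_of_pos_right r hε))
  have hal := abs_le.mp (ha l)
  have hbl := abs_le.mp (hb l)
  have habl := abs_lt.mp ((Real.dist_eq _ _ ▸ PiLp.dist_apply_le a b l).trans_lt hab)
  rw [abs_le]
  constructor <;> linarith [habl.1, habl.2]

lemma abs_le_of_mem_nbhd {d : ℕ} {m : ℝ} (hm : 0 ≤ m) {j : Fin d → ℤ}
    {x : EuclideanSpace ℝ (Fin d)} (hx : x ∈ nbhd d m j) (l : Fin d) :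
    |x l| ≤ |m * (j l : ℝ)| + 3 * m / 2 := by
  simp only [nbhd, Set.mem_iUnion, exists_prop] at hx
  obtain ⟨i, hij, hxi⟩ := hx
  have hijl : |(i l : ℝ) - j l| ≤ 1 := by
    have := (norm_le_pi_norm (i - j) l).trans hij
    rwa [Pi.sub_apply, Int.norm_eq_abs, Int.cast_sub] at this
  have hstep : |m * (i l : ℝ) - m * j l| ≤ m := by
    rw [← mul_sub, abs_mul, abs_of_nonneg hm]
    exact mul_le_of_le_one_right hm hijl
  calc |x l| = |(x l - m * i l) + (m * i l - m * j l) + m * j l| := by ring_nf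
    _ ≤ |x l - m * i l| + |m * (i l : ℝ) - m * j l| + |m * (j l : ℝ)| :=
      (abs_add_le _ _).trans (add_le_add_left (abs_add_le _ _) _)
    _ ≤ _ := by linarith [hxi l]

lemma mem_nbhd_zero_of_abs_le {d : ℕ} {n : ℝ} {x : EuclideanSpace ℝ (Fin d)}
    (hx : ∀ l, |x l| ≤ 3 * n / 2) : x ∈ nbhd d n 0 := by
  simp only [nbhd, Set.mem_iUnion, exists_prop, sub_zero]
  refine ⟨fun l => if n / 2 < x l then 1 else if x l < -(n / 2) then -1 else 0, ?_, fun l => ?_⟩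
  · refine (pi_norm_le_iff_of_nonneg zero_le_one).mpr fun l => ?_
    split_ifs <;> simp
  · have hxl := abs_le.mp (hx l)
    simp only
    split_ifs <;> rw [abs_le] <;> push_cast <;> constructor <;> linarith

theorem statement14_general (d : ℕ) (n m : ℝ)
    (hm : 0 < m) (hmn : m ≤ n / 4) (j : Fin d → ℤ)
    (h : rho d (cube d n 0) (cube d m j) ≤ n / 2) :
    nbhd d m j ⊆ nbhd d n 0 := by
  have hn : 0 ≤ n := by linarith
  intro x hx
  refine mem_nbhd_zero_of_abs_le fun l => ?_
  have hcenter := abs_sub_le_of_rho_cube_le hn hm.le h l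
  simp only [Pi.zero_apply, Int.cast_zero, mul_zero, sub_zero] at hcenter
  linarith [abs_le_of_mem_nbhd hm.le hx l]

/-- Let `d ≥ 2`, `n > 0`, `0 < m ≤ n/4` and `j ∈ ℤ^d`. If
`ρ(K_0^n, K_j^m) ≤ n/2`, then `A(K_j^m) ⊆ A(K_0^n)`. -/
theorem statement14 (d : ℕ) (hd : 2 ≤ d) (n m : ℝ) (hn : 0 < n)
    (hm : 0 < m) (hmn : m ≤ n / 4) (j : Fin d → ℤ)
    (h : rho d (cube d n 0) (cube d m j) ≤ n / 2) :
    nbhd d m j ⊆ nbhd d n 0 :=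
  statement14_general d n m hm hmn j h
end
end
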